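/- Let A be a unital C*-algebra and H a unital Hilbert A-bimodule. Let H_𝒞 denote the closed sub-bimodule of H generated by H^A (the centrally generated part of H). Then there exists a family (ξ_j)_{j∈J} of unit vectors in H^A such that the closed subspaces K_j := closure{a·ξ_j : a ∈ A} are pairwise orthogonal sub-bimodules of H whose closed linear span equals H_𝒞; moreover, the orthogonal complement of H_𝒞 in H contains no nonzero central vector for A. -/

import Mathlib

open scoped ComplexOrder ENNReal
open MulOpposite Filter

noncomputable section

/-- A unital Hilbert bimodule over a unital `ℂ`-algebra with involution: a complex Hilbert
space `H` together with a unital `*`-homomorphism `lmul : A → B(H)` and a unital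
`*`-homomorphism `rmul : Aᵐᵒᵖ → B(H)` with commuting ranges. -/
structure HBimod (A : Type*) [Ring A] [StarRing A] [Algebra ℂ A]
    (H : Type*) [NormedAddCommGroup H] [InnerProductSpace ℂ H] [CompleteSpace H] where
  lmul : A →⋆ₐ[ℂ] (H →L[ℂ] H)
  rmul : Aᵐᵒᵖ →⋆ₐ[ℂ] (H →L[ℂ] H)
  commutes : ∀ (a : A) (b : Aᵐᵒᵖ), Commute (lmul a) (rmul b)

namespace HBimod

variable {A : Type*} [Ring A] [StarRing A] [Algebra ℂ A]
variable {H : Type*} [NormedAddCommGroup H] [InnerProductSpace ℂ H] [CompleteSpace H]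
variable {H' : Type*} [NormedAddCommGroup H'] [InnerProductSpace ℂ H'] [CompleteSpace H']

/-- The left action `a · ξ`. -/
def l (M : HBimod A H) (a : A) (ξ : H) : H := M.lmul a ξ

/-- The right action `ξ · a`. -/
def r (M : HBimod A H) (a : A) (ξ : H) : H := M.rmul (op a) ξ

/-- `V_H(Q, β)`, the set of `(Q,β)`-central unit vectors. -/
def V (M : HBimod A H) (Q : Finset A) (β : ℝ) : Set H :=
  {ξ | ‖ξ‖ = 1 ∧ ∀ x ∈ Q, ‖M.l x ξ - M.r x ξ‖ < β}

/-- `H^B`, the subspace of central vectors for a subset `B ⊆ A`. -/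
def central (M : HBimod A H) (B : Set A) : Submodule ℂ H where
  carrier := {ξ | ∀ b ∈ B, M.l b ξ = M.r b ξ}
  add_mem' := by
    intro x y hx hy b hb
    simp only [Set.mem_setOf_eq, l, r] at *
    rw [map_add, map_add, hx b hb, hy b hb]
  zero_mem' := by
    intro b hb
    simp only [l, r, map_zero]
  smul_mem' := by
    intro c x hx b hb
    simp only [Set.mem_setOf_eq, l, r] at *
    rw [map_smul, map_smul, hx b hb]

theorem mem_central {M : HBimod A H} {B : Set A} {ξ : H} :
    ξ ∈ M.central B ↔ ∀ b ∈ B, M.l b ξ = M.r b ξ := Iff.rfl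

theorem isClosed_central (M : HBimod A H) (B : Set A) :
    IsClosed ((M.central B : Submodule ℂ H) : Set H) := by
  have h : ((M.central B : Submodule ℂ H) : Set H)
      = ⋂ b ∈ B, {ξ : H | M.lmul b ξ = M.rmul (op b) ξ} := by
    ext ξ
    simp only [SetLike.mem_coe, mem_central, Set.mem_iInter, Set.mem_setOf_eq, l, r]
  rw [h]
  exact isClosed_biInter fun b _ =>
    isClosed_eq (M.lmul b).continuous (M.rmul (op b)).continuous

/-- Orthogonal projection onto a closed subspace, as a map `H → H`. -/
def projOn (S : Submodule ℂ H) (hS : IsClosed (S : Set H)) (ξ : H) : H :=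
  haveI : CompleteSpace S := hS.completeSpace_coe
  (S.orthogonalProjectionOnto ξ : H)

/-- `P^B_H`, the orthogonal projection onto the space `H^B` of `B`-central vectors. -/
def P (M : HBimod A H) (B : Set A) (ξ : H) : H :=
  projOn (M.central B) (M.isClosed_central B) ξ

/-- `(ξ i)` is an almost central unit net for `A` consisting of vectors of `S`. -/
def IsAlmostCentralNet {ι : Type*} [pre : Preorder ι] (M : HBimod A H) (S : Set H)
    (ξ : ι → H) : Prop :=
  Nonempty ι ∧ IsDirected ι (· ≤ ·) ∧ (∀ i, ξ i ∈ S ∧ ‖ξ i‖ = 1) ∧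
    ∀ a : A, Tendsto (fun i => ‖M.l a (ξ i) - M.r a (ξ i)‖) atTop (nhds 0)

/-- There exists an almost central unit net for `A` consisting of vectors of `S`. -/
def HasAlmostCentralNet (M : HBimod A H) (S : Set H) : Prop :=
  ∃ (ι : Type*) (pre : Preorder ι) (ξ : ι → H), IsAlmostCentralNet (pre := pre) M S ξ

/-- The Kazhdan-type constant `t^A(Q; H, K) ∈ [0,∞]`. -/
def tConst (M : HBimod A H) (Q : Finset A) (K : Submodule ℂ H) : ℝ≥0∞ :=
  ⨅ ξ ∈ {ξ : H | ξ ∈ Kᗮ ∧ ‖ξ‖ = 1},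
    ENNReal.ofReal (Real.sqrt (∑ x ∈ Q, ‖M.l x ξ - M.r x ξ‖ ^ 2))

/-- `K` is a (closed) sub-bimodule of `H`. -/
def IsSubBimod (M : HBimod A H) (K : Submodule ℂ H) : Prop :=
  IsClosed (K : Set H) ∧ (∀ (a : A), ∀ ξ ∈ K, M.l a ξ ∈ K) ∧
    (∀ (a : A), ∀ ξ ∈ K, M.r a ξ ∈ K)

/-- The closed subspace `closure {a · ξ : a ∈ A}`. -/
def orbitCl (M : HBimod A H) (ξ : H) : Submodule ℂ H :=
  (Submodule.span ℂ {y : H | ∃ a : A, y = M.l a ξ}).topologicalClosure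

/-- `H_𝒞`, the smallest closed sub-bimodule of `H` containing `H^A` (the centrally
generated part of `H`). -/
def centGen (M : HBimod A H) : Submodule ℂ H :=
  sInf {K : Submodule ℂ H | IsSubBimod M K ∧ M.central Set.univ ≤ K}

/-- The conjugation action `π(u) ξ = u · ξ · u*` of unitaries on a bimodule. -/
def conj (M : HBimod A H) (u : A) (ξ : H) : H := M.l u (M.r (star u) ξ)

/-- The subspace of vectors fixed by the conjugation action of all unitaries of `A`. -/
def unitaryFixed (M : HBimod A H) : Submodule ℂ H where
  carrier := {η | ∀ u ∈ unitary A, M.conj u η = η}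
  add_mem' := by
    intro x y hx hy u hu
    simp only [Set.mem_setOf_eq, conj, l, r] at *
    rw [map_add, map_add, hx u hu, hy u hu]
  zero_mem' := by
    intro u hu
    simp only [conj, l, r, map_zero]
  smul_mem' := by
    intro c x hx u hu
    simp only [Set.mem_setOf_eq, conj, l, r] at *
    rw [map_smul, map_smul, hx u hu]

theorem mem_unitaryFixed {M : HBimod A H} {η : H} :
    η ∈ M.unitaryFixed ↔ ∀ u ∈ unitary A, M.conj u η = η := Iff.rfl

theorem isClosed_unitaryFixed (M : HBimod A H) :
    IsClosed ((M.unitaryFixed : Submodule ℂ H) : Set H) := by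
  have h : ((M.unitaryFixed : Submodule ℂ H) : Set H)
      = ⋂ u ∈ unitary A, {η : H | M.conj u η = η} := by
    ext η
    simp only [SetLike.mem_coe, mem_unitaryFixed, Set.mem_iInter, Set.mem_setOf_eq]
  rw [h]
  refine isClosed_biInter fun u _ => isClosed_eq ?_ continuous_id
  exact (M.lmul u).continuous.comp (M.rmul (op (star u))).continuous

theorem isClosed_inf_unitaryFixed (M : HBimod A H) (Hs : Submodule ℂ H)
    (hHs : IsClosed (Hs : Set H)) :
    IsClosed ((Hs ⊓ M.unitaryFixed : Submodule ℂ H) : Set H) := by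
  rw [Submodule.coe_inf]
  exact hHs.inter (M.isClosed_unitaryFixed)

end HBimod

/-- The pair `(A, B)` has property (T). -/
def PropertyTPair (A : Type*) [Ring A] [StarRing A] [Algebra ℂ A] (B : Set A) : Prop :=
  ∃ (F : Finset A) (ε : ℝ), 0 < ε ∧
    ∀ (H : Type*) [NormedAddCommGroup H] [InnerProductSpace ℂ H] [CompleteSpace H]
      (M : HBimod A H), (HBimod.V M F ε).Nonempty → HBimod.central M B ≠ ⊥

/-- The pair `(A, B)` has strong property (T). -/
def StrongPropertyTPair (A : Type*) [Ring A] [StarRing A] [Algebra ℂ A] (B : Set A) : Prop :=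
  ∀ α : ℝ, 0 < α → ∃ (Q : Finset A) (β : ℝ), 0 < β ∧
    ∀ (H : Type*) [NormedAddCommGroup H] [InnerProductSpace ℂ H] [CompleteSpace H]
      (M : HBimod A H), ∀ ξ ∈ HBimod.V M Q β, ‖ξ - HBimod.P M B ξ‖ < α

/-- The pair `(A, B)` is co-rigid. -/
def CoRigid (A : Type*) [Ring A] [StarRing A] [Algebra ℂ A] (B : Set A) : Prop :=
  ∃ (Q : Finset A) (β : ℝ), 0 < β ∧
    ∀ (H : Type*) [NormedAddCommGroup H] [InnerProductSpace ℂ H] [CompleteSpace H]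
      (M : HBimod A H),
      (HBimod.V M Q β ∩ (HBimod.central M B : Set H)).Nonempty →
        HBimod.central M Set.univ ≠ ⊥

/-- The pair `(A, B)` is strongly co-rigid. -/
def StronglyCoRigid (A : Type*) [Ring A] [StarRing A] [Algebra ℂ A] (B : Set A) : Prop :=
  ∀ γ : ℝ, 0 < γ → ∃ (Q : Finset A) (δ : ℝ), 0 < δ ∧
    ∀ (H : Type*) [NormedAddCommGroup H] [InnerProductSpace ℂ H] [CompleteSpace H]
      (M : HBimod A H),
      ∀ ξ ∈ HBimod.V M Q δ ∩ (HBimod.central M B : Set H),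
        ‖ξ - HBimod.P M Set.univ ξ‖ < γ

/-- An isometric embedding of Hilbert `A`-bimodules. -/
structure HBimodIsometry {A : Type*} [Ring A] [StarRing A] [Algebra ℂ A]
    {H : Type*} [NormedAddCommGroup H] [InnerProductSpace ℂ H] [CompleteSpace H]
    {H' : Type*} [NormedAddCommGroup H'] [InnerProductSpace ℂ H'] [CompleteSpace H']
    (M : HBimod A H) (N : HBimod A H') where
  toIsometry : H →ₗᵢ[ℂ] H'
  map_l : ∀ (a : A) (ξ : H), toIsometry (HBimod.l M a ξ) = HBimod.l N a (toIsometry ξ)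
  map_r : ∀ (a : A) (ξ : H), toIsometry (HBimod.r M a ξ) = HBimod.r N a (toIsometry ξ)

end

universe uH uA

/-!
Choose, by Zorn's lemma, a maximal set `S` of central unit vectors whose cyclic subspaces
`closure (A · ξ)` are pairwise orthogonal. Each such subspace is a sub-bimodule because `ξ` is
central, so the closed span `K` of them is a sub-bimodule contained in `H_𝒞`. The orthogonal
projection onto a sub-bimodule commutes with both actions, hence maps central vectors to central
vectors; so if some central vector were not in `K`, the normalised component of it in `Kᗮ` could
be added to `S`, contradicting maximality. Thus `K` contains `H^A`, and `K = H_𝒞`.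
-/

open scoped InnerProductSpace

theorem Submodule.starProjection_comm_of_invariant {𝕜 E : Type*} [RCLike 𝕜]
    [NormedAddCommGroup E] [InnerProductSpace 𝕜 E] {K : Submodule 𝕜 E}
    [K.HasOrthogonalProjection] (f : E →ₗ[𝕜] E) (hK : ∀ ξ ∈ K, f ξ ∈ K)
    (hK' : ∀ ξ ∈ Kᗮ, f ξ ∈ Kᗮ) (ξ : E) :
    K.starProjection (f ξ) = f (K.starProjection ξ) :=
  eq_starProjection_of_mem_orthogonal' (hK _ (K.starProjection_apply_mem ξ))
    (hK' _ (K.sub_starProjection_mem_orthogonal ξ)) (by rw [← map_add, add_sub_cancel])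

namespace Module.End

theorem topologicalClosure_mem_invtSubmodule {R M : Type*} [Semiring R] [TopologicalSpace M]
    [AddCommMonoid M] [Module R M] [ContinuousAdd M] [ContinuousConstSMul R M] {f : M →L[R] M}
    {p : Submodule R M} (hp : p ∈ invtSubmodule (f : M →ₗ[R] M)) :
    p.topologicalClosure ∈ invtSubmodule (f : M →ₗ[R] M) :=
  p.topologicalClosure_minimal (hp.trans (Submodule.comap_mono p.le_topologicalClosure))
    (p.isClosed_topologicalClosure.preimage f.continuous)

theorem iSup_mem_invtSubmodule {R M ι : Type*} [Semiring R] [AddCommMonoid M] [Module R M]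
    {f : Module.End R M} {p : ι → Submodule R M} (hp : ∀ i, p i ∈ f.invtSubmodule) :
    ⨆ i, p i ∈ f.invtSubmodule :=
  iSup_le fun i => (hp i).trans (Submodule.comap_mono (le_iSup p i))

end Module.End

namespace HBimod

variable {A : Type*} [Ring A] [StarRing A] [Algebra ℂ A]
  {H : Type*} [NormedAddCommGroup H] [InnerProductSpace ℂ H] [CompleteSpace H]
  (M : HBimod A H)

theorem l_mul (a b : A) (ξ : H) : M.l (a * b) ξ = M.l a (M.l b ξ) := by
  rw [l, l, l, map_mul]
  rfl

theorem l_one (ξ : H) : M.l 1 ξ = ξ := by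
  rw [l, map_one]
  rfl

theorem l_r_comm (a b : A) (ξ : H) : M.l a (M.r b ξ) = M.r b (M.l a ξ) :=
  congr($((M.commutes a (op b)).eq) ξ)

theorem inner_l_right (a : A) (ξ η : H) : ⟪ξ, M.l a η⟫_ℂ = ⟪M.l (star a) ξ, η⟫_ℂ := by
  rw [l, l, map_star, ContinuousLinearMap.star_eq_adjoint,
    ContinuousLinearMap.adjoint_inner_left]

theorem inner_r_right (a : A) (ξ η : H) : ⟪ξ, M.r a η⟫_ℂ = ⟪M.r (star a) ξ, η⟫_ℂ := by
  rw [r, r, op_star, map_star, ContinuousLinearMap.star_eq_adjoint,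
    ContinuousLinearMap.adjoint_inner_left]

variable {M}

theorem isSubBimod_topologicalClosure {W : Submodule ℂ H}
    (hl : ∀ a, W ∈ Module.End.invtSubmodule (M.lmul a : H →ₗ[ℂ] H))
    (hr : ∀ a, W ∈ Module.End.invtSubmodule (M.rmul (op a) : H →ₗ[ℂ] H)) :
    M.IsSubBimod W.topologicalClosure :=
  ⟨W.isClosed_topologicalClosure,
    fun a => Module.End.topologicalClosure_mem_invtSubmodule (hl a),
    fun a => Module.End.topologicalClosure_mem_invtSubmodule (hr a)⟩

theorem isSubBimod_topologicalClosure_iSup {ι : Type*} {K : ι → Submodule ℂ H}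
    (hK : ∀ j, M.IsSubBimod (K j)) : M.IsSubBimod (⨆ j, K j).topologicalClosure :=
  isSubBimod_topologicalClosure
    (fun a => Module.End.iSup_mem_invtSubmodule fun j => (hK j).2.1 a)
    (fun a => Module.End.iSup_mem_invtSubmodule fun j => (hK j).2.2 a)

theorem IsSubBimod.orthogonal {K : Submodule ℂ H} (hK : M.IsSubBimod K) : M.IsSubBimod Kᗮ :=
  ⟨K.isClosed_orthogonal,
    fun a ξ hξ η hη => by rw [inner_l_right]; exact hξ _ (hK.2.1 _ η hη),
    fun a ξ hξ η hη => by rw [inner_r_right]; exact hξ _ (hK.2.2 _ η hη)⟩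

theorem IsSubBimod.starProjection_mem_central {K : Submodule ℂ H} [K.HasOrthogonalProjection]
    (hK : M.IsSubBimod K) {B : Set A} {ξ : H} (hξ : ξ ∈ M.central B) :
    K.starProjection ξ ∈ M.central B := fun b hb => by
  have hl := K.starProjection_comm_of_invariant (M.lmul b) (hK.2.1 b) (hK.orthogonal.2.1 b) ξ
  have hr := K.starProjection_comm_of_invariant (M.rmul (op b)) (hK.2.2 b)
    (hK.orthogonal.2.2 b) ξ
  calc M.l b (K.starProjection ξ) = K.starProjection (M.l b ξ) := hl.symm
    _ = K.starProjection (M.r b ξ) := by rw [hξ b hb]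
    _ = M.r b (K.starProjection ξ) := hr

theorem IsSubBimod.exists_central_unit_mem_orthogonal {K : Submodule ℂ H}
    (hK : M.IsSubBimod K) {B : Set A} (hB : ¬M.central B ≤ K) :
    ∃ ζ ∈ M.central B, ζ ∈ Kᗮ ∧ ‖ζ‖ = 1 := by
  have : CompleteSpace K := hK.1.completeSpace_coe
  obtain ⟨η, hη, hηK⟩ := SetLike.not_le_iff_exists.1 hB
  set η' := η - K.starProjection η
  have hη' : η' ≠ 0 := fun h =>
    hηK (sub_eq_zero.1 h ▸ K.starProjection_apply_mem η)
  refine ⟨‖η'‖⁻¹ • η', Submodule.smul_mem _ _ ?_, Submodule.smul_mem _ _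
    (K.sub_starProjection_mem_orthogonal η), norm_smul_inv_norm hη'⟩
  exact Submodule.sub_mem _ hη (hK.starProjection_mem_central hη)

variable (M) in
theorem mem_orbitCl_self (ξ : H) : ξ ∈ M.orbitCl ξ :=
  Submodule.le_topologicalClosure _ (Submodule.subset_span ⟨1, (M.l_one ξ).symm⟩)

theorem IsSubBimod.orbitCl_le {K : Submodule ℂ H} (hK : M.IsSubBimod K) {ξ : H} (hξ : ξ ∈ K) :
    M.orbitCl ξ ≤ K :=
  Submodule.topologicalClosure_minimal _
    (Submodule.span_le.2 fun _ ⟨a, ha⟩ => ha ▸ hK.2.1 a ξ hξ) hK.1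

theorem isSubBimod_orbitCl {ξ : H} (hξ : ξ ∈ M.central Set.univ) :
    M.IsSubBimod (M.orbitCl ξ) := by
  refine isSubBimod_topologicalClosure (fun b => Submodule.span_le.2 ?_)
    (fun b => Submodule.span_le.2 ?_)
  · rintro _ ⟨a, rfl⟩
    exact Submodule.subset_span ⟨b * a, (M.l_mul b a ξ).symm⟩
  · rintro _ ⟨a, rfl⟩
    refine Submodule.subset_span ⟨a * b, ?_⟩
    show M.r b (M.l a ξ) = _
    rw [← l_r_comm, ← hξ b trivial, l_mul]

variable (M) in
theorem central_le_centGen : M.central Set.univ ≤ M.centGen :=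
  le_sInf fun _ hK => hK.2

theorem centGen_le {K : Submodule ℂ H} (hK : M.IsSubBimod K) (hcent : M.central Set.univ ≤ K) :
    M.centGen ≤ K :=
  sInf_le ⟨hK, hcent⟩

variable (M) in
def IsOrthoCentralFamily (S : Set H) : Prop :=
  (∀ ξ ∈ S, ξ ∈ M.central Set.univ ∧ ‖ξ‖ = 1) ∧ S.Pairwise (M.orbitCl · ⟂ M.orbitCl ·)

variable (M) in
theorem exists_maximal_isOrthoCentralFamily : ∃ S, Maximal M.IsOrthoCentralFamily S :=
  zorn_subset {S | M.IsOrthoCentralFamily S} fun c hc hchain =>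
    ⟨⋃₀ c, ⟨fun ξ ⟨_, hs, hξ⟩ => (hc hs).1 ξ hξ,
      (Set.pairwise_sUnion hchain.directedOn).2 fun _ hs => (hc hs).2⟩,
      fun _ => Set.subset_sUnion_of_mem⟩

theorem topologicalClosure_iSup_orbitCl_eq_centGen {S : Set H}
    (hS : Maximal M.IsOrthoCentralFamily S) :
    (⨆ ξ : S, M.orbitCl ξ).topologicalClosure = M.centGen := by
  set K := (⨆ ξ : S, M.orbitCl ξ).topologicalClosure
  have hcentS : ∀ ξ ∈ S, ξ ∈ M.central Set.univ := fun ξ hξ => (hS.prop.1 ξ hξ).1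
  have hK : M.IsSubBimod K :=
    isSubBimod_topologicalClosure_iSup fun ξ => isSubBimod_orbitCl (hcentS ξ ξ.2)
  have hSK : ∀ ξ ∈ S, ξ ∈ K := fun ξ hξ => Submodule.le_topologicalClosure _
    (Submodule.mem_iSup_of_mem ⟨ξ, hξ⟩ (M.mem_orbitCl_self ξ))
  refine le_antisymm (le_sInf fun K' ⟨hK', hcent⟩ => ?_) (centGen_le hK ?_)
  · exact Submodule.topologicalClosure_minimal _
      (iSup_le fun ξ => hK'.orbitCl_le (hcent (hcentS ξ ξ.2))) hK'.1
  by_contra hnot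
  obtain ⟨ζ, hζ, hζK, hζ1⟩ := hK.exists_central_unit_mem_orthogonal hnot
  have hins : M.IsOrthoCentralFamily (insert ζ S) := by
    refine ⟨Set.forall_mem_insert.2 ⟨⟨hζ, hζ1⟩, hS.prop.1⟩, hS.prop.2.insert fun ξ hξ _ => ?_⟩
    have hζξ := K.isOrtho_orthogonal_left.mono (hK.orthogonal.orbitCl_le hζK)
      (hK.orbitCl_le (hSK ξ hξ))
    exact ⟨hζξ, hζξ.symm⟩
  have hζS : ζ ∈ S := hS.2 hins (Set.subset_insert ζ S) (Set.mem_insert ζ S)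
  have hζ0 : ζ = 0 := Submodule.disjoint_def.1 K.orthogonal_disjoint ζ (hSK ζ hζS) hζK
  simp [hζ0] at hζ1

end HBimod

theorem centrally_generated_part_decomposition (A : Type uA) [CStarAlgebra A]
    (H : Type uH) [NormedAddCommGroup H] [InnerProductSpace ℂ H] [CompleteSpace H]
    (M : HBimod A H) :
    (∃ (J : Type uH) (ξv : J → H),
      (∀ j, ξv j ∈ HBimod.central M Set.univ) ∧ (∀ j, ‖ξv j‖ = 1) ∧
      (∀ j, HBimod.IsSubBimod M (HBimod.orbitCl M (ξv j))) ∧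
      (∀ i j, i ≠ j → ∀ x ∈ HBimod.orbitCl M (ξv i), ∀ y ∈ HBimod.orbitCl M (ξv j),
        (inner ℂ x y : ℂ) = 0) ∧
      (⨆ j, HBimod.orbitCl M (ξv j)).topologicalClosure = HBimod.centGen M) ∧
    (∀ η ∈ (HBimod.centGen M)ᗮ, η ∈ HBimod.central M Set.univ → η = 0) := by
  obtain ⟨S, hS⟩ := M.exists_maximal_isOrthoCentralFamily
  refine ⟨⟨S, (↑), fun ξ => (hS.prop.1 ξ ξ.2).1, fun ξ => (hS.prop.1 ξ ξ.2).2,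
    fun ξ => HBimod.isSubBimod_orbitCl (hS.prop.1 ξ ξ.2).1, fun ξ ζ hξζ => ?_,
    HBimod.topologicalClosure_iSup_orbitCl_eq_centGen hS⟩, fun η hperp hη => ?_⟩
  · exact Submodule.isOrtho_iff_inner_eq.1 (hS.prop.2 ξ.2 ζ.2 (Subtype.coe_injective.ne hξζ))
  · exact Submodule.disjoint_def.1 M.centGen.orthogonal_disjoint η (M.central_le_centGen hη) hperp
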